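/- Let p be an odd prime and let k ≥ 4 be an even integer with (p − 1) ∤ k. Then G_k ≡ G*_k (mod p^{k−1}) coefficientwise in ℚ[[q]]: all coefficients of G_k and G*_k are p-integral, the constant terms satisfy v_p( −B_k/(2k) + (1 − p^{k−1})B_k/(2k) ) ≥ k − 1, and for every n ≥ 1, v_p( σ_{k−1}(n) − σ*_{k−1}(n) ) ≥ k − 1. -/

import Mathlib

open scoped BigOperators

noncomputable def sigmaQ (k : ℕ) (n : ℕ) : ℚ := ∑ d ∈ n.divisors, (d : ℚ) ^ k

/-- Serre's normalized Eisenstein series G_k (with the convention G_k = 0 for bad k). -/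
noncomputable def G (k : ℤ) : PowerSeries ℚ :=
  if 4 ≤ k ∧ Even k then
    PowerSeries.mk fun n =>
      if n = 0 then -(bernoulli k.toNat) / (2 * (k : ℚ)) else sigmaQ (k.toNat - 1) n
  else 0

/-- `F ≡ H (mod p^N)` coefficientwise: all coefficients are p-integral and every
coefficient of the difference has p-adic valuation at least N. -/
def SCongr (p N : ℕ) (F H : PowerSeries ℚ) : Prop :=
  (∀ n, padicNorm p (PowerSeries.coeff n F) ≤ 1) ∧
  (∀ n, padicNorm p (PowerSeries.coeff n H) ≤ 1) ∧
  ∀ n, padicNorm p (PowerSeries.coeff n (F - H)) ≤ (p : ℚ) ^ (-(N : ℤ))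

noncomputable def sigmaStarQ (p k n : ℕ) : ℚ :=
  ∑ d ∈ n.divisors.filter (fun d => ¬ p ∣ d), (d : ℚ) ^ k

/-- Serre's p-adic Eisenstein series G*_k (with the convention G*_k = 0 for bad k). -/
noncomputable def Gstar (p : ℕ) (k : ℤ) : PowerSeries ℚ :=
  if 4 ≤ k ∧ Even k then
    PowerSeries.mk fun n =>
      if n = 0 then -((1 - (p : ℚ) ^ (k.toNat - 1)) * bernoulli k.toNat / (2 * (k : ℚ)))
      else sigmaStarQ p (k.toNat - 1) n
  else 0

/-!
Everything reduces to the p-integrality of `B_k / k` when `(p - 1) ∤ k` (and `2` is a unit since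
`p` is odd): the constant terms differ by `p^(k-1) B_k / (2k)`, and `σ_{k-1}(n) - σ*_{k-1}(n)` is a
sum of `(k-1)`-th powers of multiples of `p`.

For the integrality let `e = v_p(k)`, `N = e + 2`, and pick `c` prime to `p` with
`c^k ≢ 1 (mod p)`, possible because `(ℤ/p)ˣ` is cyclic of order `p - 1`. Multiplication by `c`
permutes `ℤ/p^N`, and `a ≡ b (mod p^N)` gives `a^k ≡ b^k (mod p^(N+e))`, so
`(c^k - 1) S ≡ 0` and `p^(N+e)` divides `S = ∑_{a < p^N} a^k`. Faulhaber's formula reads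
`S = B_k p^N + ∑_{i<k} B_i binom(k,i) p^(N(k+1-i)) / (k+1-i)`, and since `|B_i|_p ≤ p` by
von Staudt–Clausen, every term of the last sum is divisible by `p^(2N-2) = p^(N+e)`.
Hence `v_p(B_k) ≥ e = v_p(k)`.
-/

open Finset

lemma dvd_add_pow_sub_pow {R : Type*} [CommRing R] {d t : R} (x : R) {k : ℕ}
    (hk : d ∣ t * k) (ht : d ∣ t ^ 2) : d ∣ (x + t) ^ k - x ^ k := by
  have hsq := ht.trans (sq_dvd_add_pow_sub_sub t x k)
  have hsplit : (x + t) ^ k - x ^ k =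
      ((x + t) ^ k - x ^ (k - 1) * t * k - x ^ k) + x ^ (k - 1) * (t * k) := by ring
  rw [hsplit]
  exact dvd_add hsq (dvd_mul_of_dvd_right hk _)

lemma sum_range_mul_mod {M : Type*} [AddCommMonoid M] {m c : ℕ} (hc : c.Coprime m)
    (f : ℕ → M) : ∑ a ∈ range m, f (c * a % m) = ∑ a ∈ range m, f a := by
  have hinj : Set.InjOn (fun a ↦ c * a % m) (range m) := fun a ha b hb hab ↦
    (Nat.ModEq.cancel_left_of_coprime (Nat.coprime_comm.1 hc) hab).eq_of_lt_of_lt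
      (mem_range.1 ha) (mem_range.1 hb)
  have himage : (range m).image (fun a ↦ c * a % m) = range m := by
    refine eq_of_subset_of_card_le (fun x hx ↦ ?_) (card_image_of_injOn hinj).ge
    obtain ⟨a, ha, rfl⟩ := mem_image.1 hx
    exact mem_range.2 (Nat.mod_lt _ (pos_of_ne_zero (by rintro rfl; simp at ha)))
  rw [← sum_image hinj, himage]

lemma dvd_pow_sub_one_mul_sum_range_pow {m c k : ℕ} {d : ℤ} (hc : c.Coprime m)
    (hdk : d ∣ m * k) (hdm : d ∣ (m : ℤ) ^ 2) :
    d ∣ ((c : ℤ) ^ k - 1) * ∑ a ∈ range m, (a : ℤ) ^ k := by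
  have hperm := sum_range_mul_mod hc fun a : ℕ ↦ (a : ℤ) ^ k
  have hsum : ((c : ℤ) ^ k - 1) * ∑ a ∈ range m, (a : ℤ) ^ k =
      ∑ a ∈ range m, (((c * a : ℕ) : ℤ) ^ k - ((c * a % m : ℕ) : ℤ) ^ k) := by
    rw [sum_sub_distrib, hperm, sub_one_mul, mul_sum]
    push_cast [mul_pow]
    rfl
  rw [hsum]
  refine dvd_sum fun a _ ↦ ?_
  have hdiv : ((c * a : ℕ) : ℤ) = ((c * a % m : ℕ) : ℤ) + m * ((c * a / m : ℕ) : ℤ) := by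
    exact_mod_cast (Nat.mod_add_div (c * a) m).symm
  rw [hdiv]
  refine dvd_add_pow_sub_pow _ ?_ ?_
  · rw [mul_right_comm]; exact dvd_mul_of_dvd_left hdk _
  · rw [mul_pow]; exact dvd_mul_of_dvd_left hdm _

lemma prime_pow_dvd_sum_range_pow {p c k e N : ℕ} (hp : p.Prime) (hcp : ¬ p ∣ c)
    (hck : ¬ (p : ℤ) ∣ (c : ℤ) ^ k - 1) (he : p ^ e ∣ k) (heN : e ≤ N) :
    (p : ℤ) ^ (N + e) ∣ ∑ a ∈ range (p ^ N), (a : ℤ) ^ k := by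
  have hcop : IsCoprime ((p : ℤ) ^ (N + e)) ((c : ℤ) ^ k - 1) :=
    ((Nat.prime_iff_prime_int.1 hp).coprime_iff_not_dvd.2 hck).pow_left
  refine hcop.dvd_of_dvd_mul_left (dvd_pow_sub_one_mul_sum_range_pow ?_ ?_ ?_)
  · exact (hp.coprime_iff_not_dvd.2 hcp).symm.pow_right N
  · push_cast; rw [pow_add]; exact mul_dvd_mul_left _ (Int.natCast_dvd_natCast.2 he)
  · push_cast; rw [← pow_mul]; exact pow_dvd_pow _ (by omega)

lemma exists_not_dvd_pow_sub_one {p k : ℕ} [Fact p.Prime] (hk : ¬ (p - 1) ∣ k) :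
    ∃ c : ℕ, ¬ p ∣ c ∧ ¬ (p : ℤ) ∣ (c : ℤ) ^ k - 1 := by
  obtain ⟨u, hu⟩ : ∃ u : (ZMod p)ˣ, u ^ k ≠ 1 := by
    by_contra! h
    have := Monoid.exponent_dvd_of_forall_pow_eq_one h
    rw [IsCyclic.exponent_eq_card, Nat.card_eq_fintype_card, ZMod.card_units] at this
    exact hk this
  have hc : ((u : ZMod p).val : ZMod p) = u := ZMod.natCast_zmod_val _
  refine ⟨(u : ZMod p).val, ?_, ?_⟩
  · rw [← ZMod.natCast_eq_zero_iff, hc]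
    exact u.ne_zero
  · rw [← ZMod.intCast_zmod_eq_zero_iff_dvd]
    push_cast
    rw [hc, sub_eq_zero, ← Units.val_pow_eq_pow_val, Units.val_eq_one]
    exact hu

section padicNorm

variable {p : ℕ}

lemma padicNorm_natCast_eq (n : ℕ) (hn : n ≠ 0) :
    padicNorm p n = (p : ℚ) ^ (-(padicValNat p n : ℤ)) := by
  rw [padicNorm.eq_zpow_of_nonzero (by exact_mod_cast hn), padicValRat.of_nat]

variable [Fact p.Prime]

lemma padicNorm_one_div_prime_le {q : ℕ} (hq : q.Prime) : padicNorm p (1 / q) ≤ p := by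
  have hp := (Fact.out : p.Prime)
  rw [padicNorm.div, padicNorm.one]
  by_cases hpq : p = q
  · subst hpq
    rw [padicNorm.padicNorm_p_of_prime, one_div, inv_inv]
  · rw [(padicNorm.nat_eq_one_iff q).2 fun h ↦ hpq ((Nat.prime_dvd_prime_iff_eq hp hq).1 h),
      div_one]
    exact_mod_cast hp.one_le

lemma padicNorm_bernoulli_le (j : ℕ) : padicNorm p (bernoulli j) ≤ p := by
  have hp1 : (1 : ℚ) ≤ p := by exact_mod_cast (Fact.out : p.Prime).one_le
  obtain ⟨m, rfl | rfl⟩ := Nat.even_or_odd' j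
  · obtain ⟨z, hz⟩ := Bernoulli.vonStaudt_clausen m
    rw [eq_sub_of_add_eq hz.symm]
    refine padicNorm.sub.trans (max_le ((padicNorm.of_int z).trans hp1) ?_)
    exact padicNorm.sum_le' (fun q hq ↦ padicNorm_one_div_prime_le (mem_filter.1 hq).2.1)
      (by positivity)
  · rcases m.eq_zero_or_pos with rfl | hm
    · rw [bernoulli_one, neg_div, padicNorm.neg]
      exact_mod_cast padicNorm_one_div_prime_le Nat.prime_two
    · rw [bernoulli_eq_zero_of_odd (odd_two_mul_add_one m) (by omega), padicNorm.zero]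
      positivity

lemma padicNorm_prime_pow_div_le (N j : ℕ) (hj : j ≠ 0) :
    padicNorm p ((p : ℚ) ^ (N * j) / j) ≤ (p : ℚ) ^ ((j : ℤ) - 1 - N * j) := by
  have hp := (Fact.out : p.Prime)
  have hv : padicValNat p j < j :=
    (padicValNat_le_nat_log j).trans_lt (Nat.log_lt_self p hj)
  rw [padicNorm.div, ← Nat.cast_pow, padicNorm_natCast_eq _ (pow_ne_zero _ hp.ne_zero),
    padicNorm_natCast_eq _ hj, padicValNat.prime_pow, ← zpow_sub₀ (by exact_mod_cast hp.ne_zero)]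
  exact zpow_le_zpow_right₀ (by exact_mod_cast hp.one_le) (by rw [Nat.cast_mul]; omega)

end padicNorm

section Bernoulli

lemma bernoulli_mul_eq_sum_range_pow_sub (n k : ℕ) :
    bernoulli k * n = ∑ a ∈ range n, (a : ℚ) ^ k
      - ∑ i ∈ range k, bernoulli i * (k + 1).choose i * (n : ℚ) ^ (k + 1 - i) / (k + 1) := by
  rw [sum_range_pow, sum_range_succ, Nat.choose_succ_self_right, Nat.add_sub_cancel_left]
  push_cast
  field_simp
  ring

variable {p : ℕ} [Fact p.Prime]

lemma padicNorm_faulhaber_term_le {B : ℚ} (hB : padicNorm p B ≤ p) {i k N : ℕ} (hi : i < k)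
    (hN : 1 ≤ N) :
    padicNorm p (B * (k + 1).choose i * ((p : ℚ) ^ N) ^ (k + 1 - i) / (k + 1))
      ≤ (p : ℚ) ^ (2 - 2 * (N : ℤ)) := by
  have hp := (Fact.out : p.Prime)
  have hp0 : (0 : ℚ) < p := by exact_mod_cast hp.pos
  set j := k + 1 - i with hj
  have hchoose : ((k + 1).choose i : ℚ) / (k + 1) = (k.choose i : ℚ) / j := by
    rw [div_eq_div_iff (by positivity) (by rw [hj]; exact_mod_cast (by omega : j ≠ 0))]
    exact_mod_cast (Nat.choose_mul_succ_eq k i).symm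
  have hterm : B * (k + 1).choose i * ((p : ℚ) ^ N) ^ j / (k + 1)
      = B * k.choose i * ((p : ℚ) ^ (N * j) / j) := by
    calc B * (k + 1).choose i * ((p : ℚ) ^ N) ^ j / (k + 1)
        = B * (p : ℚ) ^ (N * j) * (((k + 1).choose i : ℚ) / (k + 1)) := by ring
      _ = B * k.choose i * ((p : ℚ) ^ (N * j) / j) := by rw [hchoose]; ring
  rw [hterm, padicNorm.mul, padicNorm.mul]
  calc padicNorm p B * padicNorm p (k.choose i) * padicNorm p ((p : ℚ) ^ (N * j) / j)
      ≤ p * 1 * (p : ℚ) ^ ((j : ℤ) - 1 - N * j) := by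
        refine mul_le_mul (mul_le_mul hB (padicNorm.of_nat _) (padicNorm.nonneg _) hp0.le)
          (padicNorm_prime_pow_div_le N j (by omega)) (padicNorm.nonneg _) (by positivity)
    _ = (p : ℚ) ^ ((j : ℤ) * (1 - N)) := by
        rw [mul_one, ← zpow_one_add₀ hp0.ne']
        ring_nf
    _ ≤ (p : ℚ) ^ (2 - 2 * (N : ℤ)) := by
        refine zpow_le_zpow_right₀ (by exact_mod_cast hp.one_le) ?_
        have : (2 : ℤ) ≤ j := by omega
        nlinarith

theorem padicNorm_bernoulli_div_le_one {k : ℕ} (hk : ¬ (p - 1) ∣ k) :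
    padicNorm p (bernoulli k / k) ≤ 1 := by
  have hp := (Fact.out : p.Prime)
  have hk0 : k ≠ 0 := by rintro rfl; exact hk (dvd_zero _)
  set e := padicValNat p k
  set N := e + 2
  obtain ⟨c, hcp, hck⟩ := exists_not_dvd_pow_sub_one hk
  have hS : padicNorm p (∑ a ∈ range (p ^ N), (a : ℚ) ^ k) ≤ (p : ℚ) ^ (-((N + e : ℕ) : ℤ)) := by
    have := prime_pow_dvd_sum_range_pow hp hcp hck pow_padicValNat_dvd (by omega : e ≤ N)
    exact_mod_cast padicNorm.dvd_iff_norm_le.1 (by exact_mod_cast this)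
  have hT : padicNorm p (∑ i ∈ range k,
      bernoulli i * (k + 1).choose i * ((p ^ N : ℕ) : ℚ) ^ (k + 1 - i) / (k + 1))
        ≤ (p : ℚ) ^ (-((N + e : ℕ) : ℤ)) := by
    refine padicNorm.sum_le' (fun i hi ↦ ?_) (by positivity)
    push_cast
    refine (padicNorm_faulhaber_term_le (padicNorm_bernoulli_le i) (mem_range.1 hi)
      (by omega)).trans_eq ?_
    congr 1
    omega
  have hkN : padicNorm p ((k * p ^ N : ℕ) : ℚ) = (p : ℚ) ^ (-((N + e : ℕ) : ℤ)) := by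
    rw [padicNorm_natCast_eq _ (mul_ne_zero hk0 (pow_ne_zero _ hp.ne_zero)),
      padicValNat.mul hk0 (pow_ne_zero _ hp.ne_zero), padicValNat.prime_pow, add_comm]
  have hle := padicNorm.sub.trans (max_le hS hT)
  rw [← bernoulli_mul_eq_sum_range_pow_sub, ← div_mul_cancel₀ (bernoulli k)
    (Nat.cast_ne_zero.2 hk0), mul_assoc, padicNorm.mul, ← Nat.cast_mul, hkN] at hle
  exact le_of_mul_le_mul_right (by simpa using hle) (zpow_pos (by exact_mod_cast hp.pos) _)

end Bernoulli

section Eisenstein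

open PowerSeries

lemma coeff_G {k : ℕ} (hk4 : 4 ≤ k) (hke : Even k) (n : ℕ) :
    coeff n (G k) = if n = 0 then -bernoulli k / (2 * k) else sigmaQ (k - 1) n := by
  rw [G, if_pos ⟨by exact_mod_cast hk4, hke.natCast⟩, coeff_mk, Int.toNat_natCast,
    Int.cast_natCast]

lemma coeff_Gstar (p : ℕ) {k : ℕ} (hk4 : 4 ≤ k) (hke : Even k) (n : ℕ) :
    coeff n (Gstar p k) = if n = 0 then -((1 - (p : ℚ) ^ (k - 1)) * bernoulli k / (2 * k))
      else sigmaStarQ p (k - 1) n := by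
  rw [Gstar, if_pos ⟨by exact_mod_cast hk4, hke.natCast⟩, coeff_mk, Int.toNat_natCast,
    Int.cast_natCast]

lemma sigmaQ_sub_sigmaStarQ (p j n : ℕ) :
    sigmaQ j n - sigmaStarQ p j n = ∑ d ∈ n.divisors with p ∣ d, (d : ℚ) ^ j := by
  rw [sigmaQ, sigmaStarQ, ← sum_filter_add_sum_filter_not n.divisors (p ∣ ·)]
  ring

lemma coeff_G_sub_Gstar (p : ℕ) {k : ℕ} (hk4 : 4 ≤ k) (hke : Even k) (n : ℕ) :
    coeff n (G k - Gstar p k) = if n = 0 then -((p : ℚ) ^ (k - 1) * (bernoulli k / (2 * k)))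
      else ∑ d ∈ n.divisors with p ∣ d, (d : ℚ) ^ (k - 1) := by
  rw [map_sub, coeff_G hk4 hke, coeff_Gstar p hk4 hke]
  split_ifs
  · ring
  · exact sigmaQ_sub_sigmaStarQ p (k - 1) n

variable {p : ℕ} [Fact p.Prime]

lemma sCongr_of_padicNorm_le {N : ℕ} {F H : PowerSeries ℚ}
    (hF : ∀ n, padicNorm p (coeff n F) ≤ 1)
    (hFH : ∀ n, padicNorm p (coeff n (F - H)) ≤ (p : ℚ) ^ (-(N : ℤ))) : SCongr p N F H := by
  refine ⟨hF, fun n ↦ ?_, hFH⟩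
  have hpN : (p : ℚ) ^ (-(N : ℤ)) ≤ 1 :=
    zpow_le_one_of_nonpos₀ (by exact_mod_cast (Fact.out : p.Prime).one_le) (by omega)
  rw [← sub_sub_cancel F H, map_sub]
  exact padicNorm.sub.trans (max_le (hF n) ((hFH n).trans hpN))

lemma padicNorm_sum_natCast_pow_le_one (s : Finset ℕ) (j : ℕ) :
    padicNorm p (∑ d ∈ s, (d : ℚ) ^ j) ≤ 1 :=
  padicNorm.sum_le' (fun d _ ↦ by exact_mod_cast padicNorm.of_nat (d ^ j)) zero_le_one

lemma padicNorm_natCast_pow_le_of_dvd {d : ℕ} (hd : p ∣ d) (j : ℕ) :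
    padicNorm p ((d : ℚ) ^ j) ≤ (p : ℚ) ^ (-(j : ℤ)) := by
  exact_mod_cast padicNorm.dvd_iff_norm_le.1 (by exact_mod_cast pow_dvd_pow_of_dvd hd j)

end Eisenstein

theorem statement8 (p : ℕ) (hp : p.Prime) (hodd : p ≠ 2)
    (k : ℕ) (hk4 : 4 ≤ k) (hke : Even k) (hndvd : ¬ (p - 1) ∣ k) :
    SCongr p (k - 1) (G (k : ℤ)) (Gstar p (k : ℤ)) := by
  have : Fact p.Prime := ⟨hp⟩
  have h2 : padicNorm p 2 = 1 := by
    exact_mod_cast (padicNorm.nat_eq_one_iff 2).2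
      fun h ↦ hodd ((Nat.prime_dvd_prime_iff_eq hp Nat.prime_two).1 h)
  have hx : padicNorm p (bernoulli k / (2 * k)) ≤ 1 := by
    rw [mul_comm, ← div_div, padicNorm.div, h2, div_one]
    exact padicNorm_bernoulli_div_le_one hndvd
  refine sCongr_of_padicNorm_le (fun n ↦ ?_) (fun n ↦ ?_)
  · rw [coeff_G hk4 hke]
    split_ifs
    · rwa [neg_div, padicNorm.neg]
    · exact padicNorm_sum_natCast_pow_le_one _ _
  · rw [coeff_G_sub_Gstar p hk4 hke]
    split_ifs
    · rw [padicNorm.neg, padicNorm.mul]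
      exact mul_le_of_le_one_right (padicNorm.nonneg _) hx |>.trans
        (padicNorm_natCast_pow_le_of_dvd dvd_rfl _)
    · exact padicNorm.sum_le' (fun d hd ↦ padicNorm_natCast_pow_le_of_dvd (mem_filter.1 hd).2 _)
        (by positivity)
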